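/- arXiv:2102.07308 — 5 statements merged into one kernel-verified Lean document; each statement's English description precedes it below -/
import Mathlib

section
/- The worst-case loss of the LMSR market maker is bounded by b·log|Ω|: for every state θ ∈ ℝ^Ω and every outcome ω ∈ Ω, θ_ω − C(θ) + C(0) ≤ b·log|Ω|. -/
/-- The worst-case loss of the LMSR market maker is bounded by `b·log|Ω|`:
for every state `θ` and every outcome `ω`, `θ_ω − C(θ) + C(0) ≤ b·log|Ω|`. -/
theorem lmsr_worst_case_loss_bound
    {Ω : Type*} [Fintype Ω] [Nonempty Ω] (b : ℝ) (hb : 0 < b) (θ : Ω → ℝ) (ω : Ω) :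
    θ ω - b * Real.log (∑ ν : Ω, Real.exp (θ ν / b)) +
      b * Real.log (∑ ν : Ω, Real.exp ((0:ℝ) / b)) ≤
    b * Real.log (Fintype.card Ω) := by
  have h0 : (∑ ν : Ω, Real.exp ((0:ℝ) / b)) = (Fintype.card Ω : ℝ) := by
    simp [zero_div]
  rw [h0]
  have hle : Real.exp (θ ω / b) ≤ ∑ ν : Ω, Real.exp (θ ν / b) :=
    Finset.single_le_sum (f := fun ν => Real.exp (θ ν / b)) (fun i _ => (Real.exp_pos _).le) (Finset.mem_univ ω)
  have hlog : θ ω / b ≤ Real.log (∑ ν : Ω, Real.exp (θ ν / b)) := by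
    calc θ ω / b = Real.log (Real.exp (θ ω / b)) := (Real.log_exp _).symm
    _ ≤ _ := Real.log_le_log (Real.exp_pos _) hle
  have := (div_le_iff₀ hb).mp hlog
  nlinarith
end

section
/- In an LMSR tree T with market state θ_ω(T) = Σ_{z ∋ ω} s_z, the root's partial normalization constant satisfies N·S_root = Σ_{ω∈Ω} e^{θ_ω(T)/b}. -/
inductive LTree where
  | leaf (lo hi s : ℝ)
  | node (lo hi s : ℝ) (l r : LTree)

namespace LTree

def lo : LTree → ℝ
  | .leaf a _ _ => a
  | .node a _ _ _ _ => a

def hi : LTree → ℝ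
  | .leaf _ h _ => h
  | .node _ h _ _ _ => h

/-- The binary-search property of an LMSR tree. -/
def BSP : LTree → Prop
  | .leaf a h _ => a < h
  | .node a h _ l r =>
      l.lo = a ∧ l.hi = r.lo ∧ r.hi = h ∧ a < l.hi ∧ l.hi < h ∧ l.BSP ∧ r.BSP

/-- `∏_{z' ∋ x} e^{s_{z'}/b}` over all nodes of the tree containing `x`. -/
noncomputable def prodF (b : ℝ) : LTree → ℝ → ℝ
  | .leaf a h s, x => if a ≤ x ∧ x < h then Real.exp (s / b) else 1
  | .node a h s l r, x =>
      (if a ≤ x ∧ x < h then Real.exp (s / b) else 1) * l.prodF b x * r.prodF b x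

/-- The market state at outcome `x`: `θ_x(T) = ∑_{z ∋ x} s_z`. -/
noncomputable def thetaF : LTree → ℝ → ℝ
  | .leaf a h s, x => if a ≤ x ∧ x < h then s else 0
  | .node a h s l r, x => (if a ≤ x ∧ x < h then s else 0) + l.thetaF x + r.thetaF x

/-- The partial normalization constant of the subtree rooted at `z`. -/
noncomputable def Sval (N : ℕ) (b : ℝ) (T : LTree) : ℝ :=
  (1 / (N : ℝ)) * ∑ j ∈ Finset.range N,
    if T.lo ≤ (j : ℝ) / N ∧ (j : ℝ) / N < T.hi then T.prodF b ((j : ℝ) / N) else 0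

end LTree

namespace LTree

theorem prodF_eq_exp_thetaF (b : ℝ) (T : LTree) (x : ℝ) :
    T.prodF b x = Real.exp (T.thetaF x / b) := by
  have exp_ite (p : Prop) [Decidable p] (s : ℝ) :
      (if p then Real.exp (s / b) else 1) = Real.exp ((if p then s else 0) / b) := by
    split_ifs <;> simp
  induction T with
  | leaf a h s => exact exp_ite _ s
  | node a h s l r ihl ihr =>
    rw [prodF, thetaF, ihl, ihr, exp_ite, add_div, add_div, Real.exp_add, Real.exp_add]

end LTree

theorem Nat.cast_div_mem_Ico_of_lt {j N : ℕ} (hj : j < N) :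
    (0 : ℝ) ≤ (j : ℝ) / N ∧ (j : ℝ) / N < 1 :=
  ⟨by positivity, (div_lt_one (by exact_mod_cast j.zero_le.trans_lt hj)).mpr (by exact_mod_cast hj)⟩

theorem lmsr_tree_root_normalization_general
    (N : ℕ) (b : ℝ) (T : LTree)
    (hlo : T.lo = 0) (hhi : T.hi = 1) :
    (N : ℝ) * T.Sval N b = ∑ j ∈ Finset.range N, Real.exp (T.thetaF ((j : ℝ) / N) / b) := by
  rw [LTree.Sval, hlo, hhi, ← mul_assoc, Finset.mul_sum]
  refine Finset.sum_congr rfl fun j hj => ?_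
  have hjN : j < N := Finset.mem_range.mp hj
  have hN : (N : ℝ) ≠ 0 := by exact_mod_cast (j.zero_le.trans_lt hjN).ne'
  rw [if_pos (Nat.cast_div_mem_Ico_of_lt hjN), mul_one_div_cancel hN, one_mul,
    LTree.prodF_eq_exp_thetaF]

/-- In an LMSR tree over `Ω = {j/N : j < N}` with root interval `[0,1)`, the root's
partial normalization constant satisfies `N·S_root = ∑_{ω∈Ω} e^{θ_ω(T)/b}`. -/
theorem lmsr_tree_root_normalization
    (N : ℕ) (hN : 0 < N) (b : ℝ) (hb : 0 < b) (T : LTree)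
    (hBSP : T.BSP) (hlo : T.lo = 0) (hhi : T.hi = 1) :
    (N : ℝ) * T.Sval N b = ∑ j ∈ Finset.range N, Real.exp (T.thetaF ((j : ℝ) / N) / b) :=
  lmsr_tree_root_normalization_general N b T hlo hhi
end

section
/- In an LMSR tree, for any node z the price of its interval event decomposes as p_{I_z}(θ) = (S_z / S_root)·Π_{z' ⊋ z} e^{s_{z'}/b}, where the product is over strict ancestors z' of z. -/
namespace LTree

/-- `Anc b T z P` holds when `z` is a (weak) descendant of the root `T` and
`P = ∏_{z' ⊋ z} e^{s_{z'}/b}` is the product over the strict ancestors of `z` in `T`. -/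
inductive Anc (b : ℝ) : LTree → LTree → ℝ → Prop
  | refl (T : LTree) : Anc b T T 1
  | left {T : LTree} {a h s : ℝ} {l r : LTree} {P : ℝ} :
      Anc b T (LTree.node a h s l r) P → Anc b T l (P * Real.exp (s / b))
  | right {T : LTree} {a h s : ℝ} {l r : LTree} {P : ℝ} :
      Anc b T (LTree.node a h s l r) P → Anc b T r (P * Real.exp (s / b))

end LTree

/-!
The exponential turns `θ_x(T) = ∑_{z' ∋ x} s_{z'}` into the product `∏_{z' ∋ x} e^{s_{z'}/b}`.
For `x ∈ I_z` the binary-search property shows that the nodes containing `x` are the strict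
ancestors of `z` together with nodes of the subtree at `z`, so `e^{θ_x/b} = P · prodF_z(x)`.
Summing over the grid gives `N · P · S_z` in the numerator and `N · S_root` in the denominator.
-/

namespace LTree

open Finset

theorem exp_thetaF_div (b : ℝ) (T : LTree) (x : ℝ) :
    Real.exp (T.thetaF x / b) = T.prodF b x := by
  induction T with
  | leaf a h s =>
      unfold thetaF prodF
      split <;> simp
  | node a h s l r ihl ihr =>
      unfold thetaF prodF
      rw [add_div, add_div, Real.exp_add, Real.exp_add, ihl, ihr]
      split <;> simp

theorem prodF_eq_one_of_not_mem {b : ℝ} {T : LTree} (hT : T.BSP) {x : ℝ}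
    (hx : ¬(T.lo ≤ x ∧ x < T.hi)) : T.prodF b x = 1 := by
  induction T with
  | leaf a h s => exact if_neg hx
  | node a h s l r ihl ihr =>
      obtain ⟨hl, hm, hr, hal, hlh, hL, hR⟩ := hT
      simp only [lo, hi] at hx
      rw [prodF, if_neg hx, ihl hL (by grind), ihr hR (by grind), mul_one, mul_one]

section Node

variable {b a h s x : ℝ} {l r : LTree}

theorem BSP.mem_of_mem_left (hT : (node a h s l r).BSP) (hx : l.lo ≤ x ∧ x < l.hi) :
    a ≤ x ∧ x < h := by
  obtain ⟨hl, -, -, -, hlh, -, -⟩ := hT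
  exact ⟨hl ▸ hx.1, hx.2.trans hlh⟩

theorem BSP.mem_of_mem_right (hT : (node a h s l r).BSP) (hx : r.lo ≤ x ∧ x < r.hi) :
    a ≤ x ∧ x < h := by
  obtain ⟨-, hm, hr, hal, -, -, -⟩ := hT
  exact ⟨hal.le.trans (hm ▸ hx.1), hr ▸ hx.2⟩

theorem prodF_node_of_mem_left (hT : (node a h s l r).BSP) (hx : l.lo ≤ x ∧ x < l.hi) :
    (node a h s l r).prodF b x = Real.exp (s / b) * l.prodF b x := by
  have hr : ¬(r.lo ≤ x ∧ x < r.hi) := fun hxr => (hT.2.1 ▸ hxr.1).not_gt hx.2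
  rw [prodF, if_pos (hT.mem_of_mem_left hx), prodF_eq_one_of_not_mem hT.2.2.2.2.2.2 hr, mul_one]

theorem prodF_node_of_mem_right (hT : (node a h s l r).BSP) (hx : r.lo ≤ x ∧ x < r.hi) :
    (node a h s l r).prodF b x = Real.exp (s / b) * r.prodF b x := by
  have hl : ¬(l.lo ≤ x ∧ x < l.hi) := fun hxl => (hT.2.1 ▸ hx.1).not_gt hxl.2
  rw [prodF, if_pos (hT.mem_of_mem_right hx), prodF_eq_one_of_not_mem hT.2.2.2.2.2.1 hl, mul_one]

end Node

theorem Anc.bsp {b P : ℝ} {T z : LTree} (hanc : Anc b T z P) (hT : T.BSP) : z.BSP := by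
  induction hanc with
  | refl => exact hT
  | left _ ih => exact ih.2.2.2.2.2.1
  | right _ ih => exact ih.2.2.2.2.2.2

theorem Anc.prodF_eq {b P : ℝ} {T z : LTree} (hanc : Anc b T z P) (hT : T.BSP) {x : ℝ}
    (hx : z.lo ≤ x ∧ x < z.hi) : T.prodF b x = P * z.prodF b x := by
  induction hanc with
  | refl => rw [one_mul]
  | left hanc ih =>
      have hnode := hanc.bsp hT
      rw [ih (hnode.mem_of_mem_left hx), prodF_node_of_mem_left hnode hx, mul_assoc]
  | right hanc ih =>
      have hnode := hanc.bsp hT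
      rw [ih (hnode.mem_of_mem_right hx), prodF_node_of_mem_right hnode hx, mul_assoc]

theorem natCast_mul_Sval {N : ℕ} (hN : (N : ℝ) ≠ 0) (b : ℝ) (T : LTree) :
    N * T.Sval N b = ∑ j ∈ range N,
      if T.lo ≤ (j : ℝ) / N ∧ (j : ℝ) / N < T.hi then T.prodF b ((j : ℝ) / N) else 0 := by
  rw [Sval, ← mul_assoc, mul_one_div_cancel hN, one_mul]

end LTree

open Finset LTree in
theorem lmsr_tree_price_decomposition_general
    (N : ℕ) (hN : 0 < N) (b : ℝ) (T z : LTree) (P : ℝ)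
    (hBSP : T.BSP) (hlo : T.lo = 0) (hhi : T.hi = 1)
    (hanc : LTree.Anc b T z P) :
    (∑ j ∈ Finset.range N,
        if z.lo ≤ (j : ℝ) / N ∧ (j : ℝ) / N < z.hi
        then Real.exp (T.thetaF ((j : ℝ) / N) / b) else 0) /
      (∑ j ∈ Finset.range N, Real.exp (T.thetaF ((j : ℝ) / N) / b)) =
    (z.Sval N b / T.Sval N b) * P := by
  have hN' : (0 : ℝ) < N := by exact_mod_cast hN
  have hden : ∑ j ∈ range N, Real.exp (T.thetaF ((j : ℝ) / N) / b) = N * T.Sval N b := by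
    rw [natCast_mul_Sval hN'.ne']
    refine sum_congr rfl fun j hj => ?_
    have hj' : (j : ℝ) / N < 1 := (div_lt_one hN').2 (by exact_mod_cast mem_range.1 hj)
    rw [if_pos (by rw [hlo, hhi]; exact ⟨by positivity, hj'⟩), exp_thetaF_div]
  have hnum : (∑ j ∈ range N, if z.lo ≤ (j : ℝ) / N ∧ (j : ℝ) / N < z.hi
      then Real.exp (T.thetaF ((j : ℝ) / N) / b) else 0) = P * (N * z.Sval N b) := by
    rw [natCast_mul_Sval hN'.ne', mul_sum]
    refine sum_congr rfl fun j _ => ?_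
    split_ifs with hj
    · rw [exp_thetaF_div, hanc.prodF_eq hBSP hj]
    · rw [mul_zero]
  have hpos : 0 < N * T.Sval N b :=
    hden ▸ sum_pos (fun j _ => Real.exp_pos _) ⟨0, mem_range.2 hN⟩
  have hST : T.Sval N b ≠ 0 := (pos_of_mul_pos_right hpos hN'.le).ne'
  rw [hnum, hden]
  field_simp

/-- Price decomposition in an LMSR tree: for any node `z` of the tree `T` with strict
ancestor product `P = ∏_{z' ⊋ z} e^{s_{z'}/b}`, the LMSR price of the interval event `I_z`
induced by the state `θ(T)` satisfies `p_{I_z}(θ) = (S_z / S_root)·P`. -/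
theorem lmsr_tree_price_decomposition
    (N : ℕ) (hN : 0 < N) (b : ℝ) (hb : 0 < b) (T z : LTree) (P : ℝ)
    (hBSP : T.BSP) (hlo : T.lo = 0) (hhi : T.hi = 1)
    (hanc : LTree.Anc b T z P) :
    (∑ j ∈ Finset.range N,
        if z.lo ≤ (j : ℝ) / N ∧ (j : ℝ) / N < z.hi
        then Real.exp (T.thetaF ((j : ℝ) / N) / b) else 0) /
      (∑ j ∈ Finset.range N, Real.exp (T.thetaF ((j : ℝ) / N) / b)) =
    (z.Sval N b / T.Sval N b) * P :=
  lmsr_tree_price_decomposition_general N hN b T z P hBSP hlo hhi hanc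
end

section
/- Coherence inductive step: in a complete binary tree of depth K with prices μ, fix level ℓ < K and suppose all pairs of levels k, m with ℓ < k ≤ m ≤ K are mutually coherent (μ_z = Σ_{u∈Z_m, u⊆z} μ_u for z ∈ Z_k). If for every y ∈ Z_ℓ the constraint (Σ_{k>ℓ} b_k)·μ_y = Σ_{k>ℓ} b_k·Σ_{z∈Z_k, z⊂y} μ_z holds with all b_k > 0, then μ_y = μ_{left(y)} + μ_{right(y)} for all y ∈ Z_ℓ, i.e., levels ℓ and ℓ+1 are coherent. -/
/-!
The subtree of `y` at level `ℓ`, read at any deeper level `k`, is the disjoint union of the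
subtrees of its two children. When level `ℓ + 1` is coherent with level `k`, every inner sum
of the constraint therefore equals `μ_{left(y)} + μ_{right(y)}`, so the constraint reads
`B · μ_y = B · (μ_{left(y)} + μ_{right(y)})` with `B = ∑_{k>ℓ} b_k > 0`.
-/

open Finset

def subtreeSum {M : Type*} [AddCommMonoid M] (μ : ℕ → ℕ → M) (k m z : ℕ) : M :=
  ∑ u ∈ Ico (z * 2 ^ (m - k)) ((z + 1) * 2 ^ (m - k)), μ m u

theorem subtreeSum_eq_add_children {M : Type*} [AddCommMonoid M] (μ : ℕ → ℕ → M)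
    {k m : ℕ} (hkm : k < m) (z : ℕ) :
    subtreeSum μ k m z = subtreeSum μ (k + 1) m (2 * z) + subtreeSum μ (k + 1) m (2 * z + 1) := by
  obtain ⟨n, rfl⟩ := Nat.exists_eq_add_of_lt hkm
  have hparent : k + n + 1 - k = n + 1 := by omega
  have hchild : k + n + 1 - (k + 1) = n := by omega
  simp only [subtreeSum, hparent, hchild]
  rw [sum_Ico_consecutive _ (by gcongr; omega) (by gcongr; omega)]
  congr 2 <;> ring

/-- Coherence inductive step: in a complete binary tree of depth `K` (level-`k` nodes are
indices `z < 2^k`, and the level-`m` descendants of `z` are `[z·2^{m−k}, (z+1)·2^{m−k})`),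
fix `ℓ < K` and suppose all pairs of levels `k ≤ m` strictly above `ℓ` are mutually coherent.
If every `y` at level `ℓ` satisfies the LCMM constraint
`(∑_{k>ℓ} b_k)·μ_y = ∑_{k>ℓ} b_k·∑_{z∈Z_k, z⊂y} μ_z` with all `b_k > 0`, then levels `ℓ`
and `ℓ+1` are coherent: `μ_y = μ_{left(y)} + μ_{right(y)}`. -/
theorem coherence_inductive_step
    (K ℓ : ℕ) (hℓ : ℓ < K) (b : ℕ → ℝ) (hb : ∀ k, 1 ≤ k → k ≤ K → 0 < b k)
    (μ : ℕ → ℕ → ℝ)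
    (hcoh : ∀ k m, ℓ < k → k ≤ m → m ≤ K → ∀ z < 2 ^ k,
      μ k z = ∑ u ∈ Finset.Ico (z * 2 ^ (m - k)) ((z + 1) * 2 ^ (m - k)), μ m u)
    (hcon : ∀ y < 2 ^ ℓ,
      (∑ k ∈ Finset.Ioc ℓ K, b k) * μ ℓ y =
        ∑ k ∈ Finset.Ioc ℓ K, b k *
          ∑ z ∈ Finset.Ico (y * 2 ^ (k - ℓ)) ((y + 1) * 2 ^ (k - ℓ)), μ k z) :
    ∀ y < 2 ^ ℓ, μ ℓ y = μ (ℓ + 1) (2 * y) + μ (ℓ + 1) (2 * y + 1) := by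
  intro y hy
  have hchildren : 2 * y + 1 < 2 ^ (ℓ + 1) := by rw [pow_succ]; omega
  have hsplit : ∀ k ∈ Ioc ℓ K,
      b k * subtreeSum μ ℓ k y = b k * (μ (ℓ + 1) (2 * y) + μ (ℓ + 1) (2 * y + 1)) := by
    intro k hk
    obtain ⟨hℓk, hkK⟩ := mem_Ioc.mp hk
    rw [subtreeSum_eq_add_children μ hℓk, subtreeSum, subtreeSum,
      ← hcoh _ _ ℓ.lt_succ_self hℓk hkK _ (by omega),
      ← hcoh _ _ ℓ.lt_succ_self hℓk hkK _ hchildren]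
  have hB : 0 < ∑ k ∈ Ioc ℓ K, b k :=
    sum_pos (fun k hk => hb k (by grind) (mem_Ioc.mp hk).2) ⟨K, mem_Ioc.mpr ⟨hℓ, le_rfl⟩⟩
  have h : _ = ∑ k ∈ Ioc ℓ K, b k * subtreeSum μ ℓ k y := hcon y hy
  rw [sum_congr rfl hsplit, ← sum_mul] at h
  exact mul_left_cancel₀ hB.ne' h
end

section
/- Closed-form arbitrage-removal trade (Lemma 3, price-matching core): let μ_y ∈ (0,1) and μ* = μ_{y_l} + μ_{y_r} ∈ (0,1), and let b_ℓ, B_ℓ > 0, B_{ℓ−1} = B_ℓ + b_ℓ. Choose t = (b_ℓ/B_{ℓ−1})·log(((1−μ_y)/μ_y)·(μ*/(1−μ*))). Then 1/(1 + ((1−μ_y)/μ_y)·e^{−t·B_ℓ/b_ℓ}) = 1/(1 + ((1−μ*)/μ*)·e^{t}); that is, the updated level-ℓ price μ'_y = μ_y·e^{tB_ℓ/b_ℓ}/(μ_y·e^{tB_ℓ/b_ℓ} + 1 − μ_y) equals the updated level-(ℓ+1) price μ'_{y_l} + μ'_{y_r} = μ*·e^{−t}/(μ*·e^{−t} + 1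 − μ*). -/
/-- Closed-form arbitrage-removal trade: with `μ_y, μ* ∈ (0,1)`, `b_ℓ, B_ℓ > 0`,
`B_{ℓ−1} = B_ℓ + b_ℓ`, and `t = (b_ℓ/B_{ℓ−1})·log(((1−μ_y)/μ_y)·(μ*/(1−μ*)))`, the updated
level-`ℓ` price `μ_y·e^{tB_ℓ/b_ℓ}/(μ_y·e^{tB_ℓ/b_ℓ} + 1 − μ_y)` equals the updated
level-`(ℓ+1)` price `μ*·e^{−t}/(μ*·e^{−t} + 1 − μ*)`. -/
theorem arbitrage_removal_price_matching
    (μy μs bl Bl t : ℝ)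
    (hμy0 : 0 < μy) (hμy1 : μy < 1) (hμs0 : 0 < μs) (hμs1 : μs < 1)
    (hbl : 0 < bl) (hBl : 0 < Bl)
    (ht : t = bl / (Bl + bl) * Real.log (((1 - μy) / μy) * (μs / (1 - μs)))) :
    μy * Real.exp (t * Bl / bl) / (μy * Real.exp (t * Bl / bl) + 1 - μy) =
    μs * Real.exp (-t) / (μs * Real.exp (-t) + 1 - μs) := by
  have hμy1' : 0 < 1 - μy := by linarith
  have hμs1' : 0 < 1 - μs := by linarith
  have hR : 0 < ((1 - μy) / μy) * (μs / (1 - μs)) := by positivity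
  have key : Real.exp (t * Bl / bl) * Real.exp t
      = ((1 - μy) / μy) * (μs / (1 - μs)) := by
    rw [← Real.exp_add, ← Real.exp_log hR]
    congr 1
    rw [ht]
    field_simp
  have hA : 0 < Real.exp (t * Bl / bl) := Real.exp_pos _
  have hT : 0 < Real.exp (-t) := Real.exp_pos _
  have hinv : Real.exp (-t) * Real.exp t = 1 := by
    rw [← Real.exp_add]; simp
  have key2 : μy * Real.exp (t * Bl / bl) * (1 - μs)
      = μs * Real.exp (-t) * (1 - μy) := by
    have h1 : Real.exp (t * Bl / bl) * Real.exp t * (μy * (1 - μs))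
        = (1 - μy) * μs := by
      rw [key]; field_simp
    have h2 := congrArg (fun x => x * Real.exp (-t)) h1
    calc μy * Real.exp (t * Bl / bl) * (1 - μs)
        = Real.exp (t * Bl / bl) * Real.exp t * (μy * (1 - μs)) * Real.exp (-t)
          - (Real.exp (-t) * Real.exp t - 1) * (Real.exp (t * Bl / bl) * (μy * (1 - μs))) := by
          ring
      _ = μs * Real.exp (-t) * (1 - μy) := by rw [hinv, h2]; ring
  have hd1 : μy * Real.exp (t * Bl / bl) + 1 - μy ≠ 0 := by nlinarith
  have hd2 : μs * Real.exp (-t) + 1 - μs ≠ 0 := by nlinarith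
  rw [div_eq_div_iff hd1 hd2]
  nlinarith [key2]
end
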